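/- arXiv:1506.06394 — 9 statements merged into one kernel-verified Lean document; each statement's English description precedes it below -/
import Mathlib

section
/- For systems f and g on a finite lattice P, the map a ↦ f a ∧ g a is a system and is the greatest lower bound of f and g in the lattice of systems. -/
def IsSystem {P : Type*} [Lattice P] (f : P → P) : Prop :=
  (∀ a, a ≤ f a) ∧ Monotone f ∧ ∀ a, f (f a) = f a

namespace IsSystem

variable {P : Type*} [Lattice P] {f g : P → P}

theorem apply_le_apply_of_le_apply (hf : IsSystem f) {a b : P} (h : b ≤ f a) : f b ≤ f a :=
  (hf.2.1 h).trans (hf.2.2 a).le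

theorem inf (hf : IsSystem f) (hg : IsSystem g) : IsSystem (fun a => f a ⊓ g a) := by
  refine ⟨fun a => le_inf (hf.1 a) (hg.1 a),
    fun a b hab => inf_le_inf (hf.2.1 hab) (hg.2.1 hab), fun a => ?_⟩
  refine le_antisymm (inf_le_inf ?_ ?_) (le_inf (hf.1 _) (hg.1 _))
  · exact hf.apply_le_apply_of_le_apply inf_le_left
  · exact hg.apply_le_apply_of_le_apply inf_le_right

end IsSystem

theorem stmt5_general {P : Type*} [Lattice P] {f g : P → P}
    (hf : IsSystem f) (hg : IsSystem g) :
    IsSystem (fun a => f a ⊓ g a) ∧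
    (∀ a, f a ⊓ g a ≤ f a) ∧ (∀ a, f a ⊓ g a ≤ g a) ∧
    ∀ h : P → P, IsSystem h → (∀ a, h a ≤ f a) → (∀ a, h a ≤ g a) →
      ∀ a, h a ≤ f a ⊓ g a :=
  ⟨hf.inf hg, fun _ => inf_le_left, fun _ => inf_le_right,
    fun _ _ hhf hhg a => le_inf (hhf a) (hhg a)⟩

theorem stmt5 {P : Type*} [Lattice P] [Fintype P] {f g : P → P}
    (hf : IsSystem f) (hg : IsSystem g) :
    IsSystem (fun a => f a ⊓ g a) ∧
    (∀ a, f a ⊓ g a ≤ f a) ∧ (∀ a, f a ⊓ g a ≤ g a) ∧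
    ∀ h : P → P, IsSystem h → (∀ a, h a ≤ f a) → (∀ a, h a ≤ g a) →
      ∀ a, h a ≤ f a ⊓ g a :=
  stmt5_general hf hg
end

section
/- For systems f and g on a finite lattice P with |P| = n, the n-fold composition (f∘g)^n is a system and is the least upper bound f + g of f and g in the lattice of systems. -/
open Function

theorem Function.isFixedPt_iterate_card_of_id_le {α : Type*} [PartialOrder α] [Fintype α]
    {f : α → α} (hf : id ≤ f) (x : α) : IsFixedPt f (f^[Fintype.card α] x) := by
  have horbit : Monotone fun k => f^[k] x := fun _ _ hkl => monotone_iterate_of_id_le hf hkl x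
  -- Pigeonhole: among the `|α| + 1` points `x, f x, …, f^[|α|] x` two coincide.
  obtain ⟨i, j, hij, heq⟩ := Fintype.exists_ne_map_eq_of_card_lt
    (fun k : Fin (Fintype.card α + 1) => f^[k] x) (by simp)
  wlog hlt : i < j generalizing i j
  · exact this j i hij.symm heq.symm (lt_of_le_of_ne (not_lt.mp hlt) hij.symm)
  have hfix : IsFixedPt f (f^[i] x) := by
    refine le_antisymm ?_ (hf _)
    calc f (f^[i] x) = f^[i + 1] x := (iterate_succ_apply' f i x).symm
      _ ≤ f^[j] x := horbit (Nat.succ_le_of_lt hlt)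
      _ = f^[i] x := heq.symm
  have hcard : Fintype.card α = (Fintype.card α - i) + i := by omega
  rw [hcard, iterate_add_apply, (hfix.iterate _).eq]
  exact hfix

section

variable {P : Type*} [Lattice P]

theorem IsSystem.comp_id_le {f g : P → P} (hf : IsSystem f) (hg : IsSystem g) : id ≤ f ∘ g :=
  fun a => (hg.1 a).trans (hf.1 (g a))

theorem isSystem_iterate_card [Fintype P] {c : P → P} (hc : id ≤ c) (hcm : Monotone c) :
    IsSystem (c^[Fintype.card P]) :=
  ⟨id_le_iterate_of_id_le hc _, hcm.iterate _,
    fun a => iterate_fixed (isFixedPt_iterate_card_of_id_le hc a) _⟩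

theorem map_le_iterate_of_id_le {c : P → P} (hc : id ≤ c) {k : ℕ} (hk : k ≠ 0) (a : P) :
    c a ≤ c^[k] a := by
  obtain ⟨m, rfl⟩ := Nat.exists_eq_succ_of_ne_zero hk
  rw [iterate_succ_apply]
  exact id_le_iterate_of_id_le hc m (c a)

theorem IsSystem.comp_le {f g h : P → P} (hf : Monotone f) (hh : IsSystem h)
    (hfh : ∀ a, f a ≤ h a) (hgh : ∀ a, g a ≤ h a) (a : P) : (f ∘ g) a ≤ h a :=
  calc f (g a) ≤ f (h a) := hf (hgh a)
    _ ≤ h (h a) := hfh (h a)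
    _ = h a := hh.2.2 a

theorem IsSystem.iterate_le {c h : P → P} (hcm : Monotone c) (hh : IsSystem h)
    (hch : ∀ a, c a ≤ h a) (k : ℕ) (a : P) : c^[k] a ≤ h a := by
  cases k with
  | zero => exact hh.1 a
  | succ k =>
    calc c^[k + 1] a ≤ h^[k + 1] a := hcm.iterate_le_of_le hch (k + 1) a
      _ = h a := by rw [iterate_succ_apply, iterate_fixed (hh.2.2 a)]

end

theorem stmt6 {P : Type*} [Lattice P] [Fintype P] {f g : P → P}
    (hf : IsSystem f) (hg : IsSystem g) :
    IsSystem ((f ∘ g)^[Fintype.card P]) ∧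
    (∀ a, f a ≤ (f ∘ g)^[Fintype.card P] a) ∧
    (∀ a, g a ≤ (f ∘ g)^[Fintype.card P] a) ∧
    ∀ h : P → P, IsSystem h → (∀ a, f a ≤ h a) → (∀ a, g a ≤ h a) →
      ∀ a, (f ∘ g)^[Fintype.card P] a ≤ h a := by
  have hc : id ≤ f ∘ g := hf.comp_id_le hg
  have hcm : Monotone (f ∘ g) := hf.2.1.comp hg.2.1
  have hcard (a : P) : Fintype.card P ≠ 0 := (Fintype.card_pos_iff.mpr ⟨a⟩).ne'
  refine ⟨isSystem_iterate_card hc hcm, fun a => ?_, fun a => ?_,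
    fun h hh hfh hgh => hh.iterate_le hcm (hh.comp_le hf.2.1 hfh hgh) _⟩
  · exact (hf.2.1 (hg.1 a)).trans (map_le_iterate_of_id_le hc (hcard a) a)
  · exact (hf.1 (g a)).trans (map_le_iterate_of_id_le hc (hcard a) a)
end

section
/- For systems f and g on a finite lattice P, the set of fixed points of the join f + g equals the intersection of the sets of fixed points of f and g. -/
section PrincipalSystem

variable {P : Type*} [Lattice P] [OrderTop P]

open Classical in
noncomputable def principalSystem (a : P) (x : P) : P :=
  if x ≤ a then a else ⊤

theorem principalSystem_self (a : P) : principalSystem a a = a :=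
  if_pos le_rfl

theorem isSystem_principalSystem (a : P) : IsSystem (principalSystem a) := by
  refine ⟨fun x => ?_, fun x y hxy => ?_, fun x => ?_⟩
  · by_cases hx : x ≤ a <;> simp [principalSystem, hx]
  · by_cases hy : y ≤ a
    · simp [principalSystem, hxy.trans hy, hy]
    · by_cases hx : x ≤ a <;> simp [principalSystem, hx, hy]
  · by_cases hx : x ≤ a
    · simp [principalSystem, hx]
    · have hta : ¬ (⊤ : P) ≤ a := fun h => hx (le_top.trans h)
      simp [principalSystem, hx, hta]

end PrincipalSystem

namespace IsSystem

variable {P : Type*} [Lattice P] {f g : P → P}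

theorem eq_of_le_of_eq (hf : IsSystem f) (hfg : ∀ x, f x ≤ g x) {a : P} (ha : g a = a) :
    f a = a :=
  le_antisymm ((hfg a).trans ha.le) (hf.1 a)

theorem le_principalSystem [OrderTop P] (hf : IsSystem f) {a : P} (ha : f a = a) (x : P) :
    f x ≤ principalSystem a x := by
  by_cases hx : x ≤ a
  · simpa [principalSystem, hx] using (hf.2.1 hx).trans ha.le
  · simp [principalSystem, hx]

end IsSystem

theorem stmt7_general {P : Type*} [Lattice P] [Fintype P] {f g j : P → P}
    (hf : IsSystem f) (hg : IsSystem g)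
    (hjf : ∀ a, f a ≤ j a) (hjg : ∀ a, g a ≤ j a)
    (hlub : ∀ h : P → P, IsSystem h → (∀ a, f a ≤ h a) → (∀ a, g a ≤ h a) →
      ∀ a, j a ≤ h a) :
    {a | j a = a} = {a | f a = a} ∩ {a | g a = a} := by
  ext a
  refine ⟨fun ha => ⟨hf.eq_of_le_of_eq hjf ha, hg.eq_of_le_of_eq hjg ha⟩, fun ⟨hfa, hga⟩ => ?_⟩
  let : OrderTop P := haveI : Nonempty P := ⟨a⟩; Fintype.toOrderTop P
  have hja : j a ≤ principalSystem a a :=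
    hlub _ (isSystem_principalSystem a) (hf.le_principalSystem hfa) (hg.le_principalSystem hga) a
  rw [principalSystem_self] at hja
  exact le_antisymm hja ((hf.1 a).trans (hjf a))

theorem stmt7 {P : Type*} [Lattice P] [Fintype P] {f g j : P → P}
    (hf : IsSystem f) (hg : IsSystem g) (hj : IsSystem j)
    (hjf : ∀ a, f a ≤ j a) (hjg : ∀ a, g a ≤ j a)
    (hlub : ∀ h : P → P, IsSystem h → (∀ a, f a ≤ h a) → (∀ a, g a ≤ h a) →
      ∀ a, j a ≤ h a) :
    {a | j a = a} = {a | f a = a} ∩ {a | g a = a} :=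
  stmt7_general hf hg hjf hjg hlub
end

section
/- For systems f and g on a finite lattice P, the fixed point set of the meet f · g equals the set meet Φf ∧ Φg = {a ∧ b : a ∈ Φf, b ∈ Φg}. -/
namespace IsSystem

variable {P : Type*} [Lattice P] {f g : P → P}

theorem apply_le_of_le_fixed (hf : IsSystem f) {x a : P} (hxa : x ≤ a) (ha : f a = a) :
    f x ≤ a :=
  (hf.2.1 hxa).trans ha.le

theorem apply_inf_apply_eq_inf (hf : IsSystem f) (hg : IsSystem g) {a b : P}
    (ha : f a = a) (hb : g b = b) : f (a ⊓ b) ⊓ g (a ⊓ b) = a ⊓ b :=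
  le_antisymm
    (inf_le_inf (hf.apply_le_of_le_fixed inf_le_left ha)
      (hg.apply_le_of_le_fixed inf_le_right hb))
    (le_inf (hf.1 _) (hg.1 _))

end IsSystem

theorem stmt8_general {P : Type*} [Lattice P] {f g : P → P}
    (hf : IsSystem f) (hg : IsSystem g) :
    {x | f x ⊓ g x = x} =
      {x | ∃ a, f a = a ∧ ∃ b, g b = b ∧ x = a ⊓ b} := by
  ext x
  constructor
  · intro hx
    exact ⟨f x, hf.2.2 x, g x, hg.2.2 x, hx.symm⟩
  · rintro ⟨a, ha, b, hb, rfl⟩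
    exact hf.apply_inf_apply_eq_inf hg ha hb

theorem stmt8 {P : Type*} [Lattice P] [Fintype P] {f g : P → P}
    (hf : IsSystem f) (hg : IsSystem g) :
    {x | f x ⊓ g x = x} =
      {x | ∃ a, f a = a ∧ ∃ b, g b = b ∧ x = a ⊓ b} :=
  stmt8_general hf hg
end

section
/- The lattice of systems on a finite lattice P is distributive if and only if P is linearly ordered. -/
def sysMeet {P : Type*} [Lattice P] (f g : P → P) : P → P := fun a => f a ⊓ g a

def sysJoin {P : Type*} [Lattice P] [Fintype P] (f g : P → P) : P → P :=
  (f ∘ g)^[Fintype.card P]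

/-!
Systems are closure operators, and `sysJoin f g x` is the least common fixed point of `f` and `g`
above `x`. With `r` the right side at `x`, the right side is at most the left one in any finite
lattice. In a chain a meet is one of its arguments, so `f r ⊓ h r = r = g r ⊓ h r` forces
`h r = r` or `f r = r = g r`, and either way the left side at `x` is at most `r`.

If `a` and `b` are incomparable, take `f = (· ⊔ b)`, `h = (· ⊔ a)` and the system `g` whose fixed
points are `a ⊓ b` and the elements above `a`: at `a ⊓ b` the left side is `a`, while `a ⊓ b` is
fixed by `f ⊓ h` and `g ⊓ h`, so the right side is `a ⊓ b`.
-/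

open Function

-- Otherwise the first `Fintype.card P + 1` iterates would form a strictly increasing chain.
lemma isFixedPt_iterate_card {P : Type*} [PartialOrder P] [Fintype P] {F : P → P}
    (hF : ∀ z, z ≤ F z) (x : P) : IsFixedPt F (F^[Fintype.card P] x) := by
  by_contra hne
  have hstep : ∀ n ≤ Fintype.card P, F^[n] x < F^[n + 1] x := by
    intro n hn
    rw [iterate_succ_apply']
    refine lt_of_le_of_ne (hF _) fun heq => hne ?_
    obtain ⟨k, hk⟩ := Nat.exists_eq_add_of_le hn
    rw [hk, add_comm, iterate_add_apply, ((IsFixedPt.iterate heq.symm) k).eq]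
    exact heq.symm
  have hmono : StrictMono fun i : Fin (Fintype.card P + 1) => F^[i] x :=
    Fin.strictMono_iff_lt_succ.2 fun i => hstep i (by omega)
  simpa using Fintype.card_le_of_injective _ hmono.injective

section Lattice

variable {P : Type*} [Lattice P]

lemma isSystem_sysMeet {f h : P → P} (hf : IsSystem f) (hh : IsSystem h) :
    IsSystem (sysMeet f h) := by
  refine ⟨fun a => le_inf (hf.1 a) (hh.1 a),
    fun a b hab => inf_le_inf (hf.2.1 hab) (hh.2.1 hab), fun a => ?_⟩
  refine le_antisymm (inf_le_inf ?_ ?_) (le_inf (hf.1 _) (hh.1 _))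
  · exact (hf.2.1 inf_le_left).trans_eq (hf.2.2 a)
  · exact (hh.2.1 inf_le_right).trans_eq (hh.2.2 a)

lemma isSystem_sup_const (b : P) : IsSystem (· ⊔ b) :=
  ⟨fun _ => le_sup_left, fun _ _ hxy => sup_le_sup_right hxy b, fun _ => by simp⟩

noncomputable def jumpSystem (c d : P) : P → P :=
  open Classical in fun x => if x ≤ c then c else x ⊔ d

lemma isSystem_jumpSystem {c d : P} (hcd : c ≤ d) : IsSystem (jumpSystem c d) := by
  classical
  refine ⟨fun x => ?_, fun x y hxy => ?_, fun x => ?_⟩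
  · unfold jumpSystem; split_ifs with hx
    exacts [hx, le_sup_left]
  · unfold jumpSystem; split_ifs with hx hy hy
    · exact le_rfl
    · exact hcd.trans le_sup_right
    · exact absurd (hxy.trans hy) hx
    · exact sup_le_sup_right hxy d
  · unfold jumpSystem; split_ifs with hx hc hxd <;> simp_all

lemma jumpSystem_self (c d : P) : jumpSystem c d c = c := by
  classical
  simp [jumpSystem]

lemma le_of_isFixedPt_jumpSystem {c d y : P} (hy : ¬ y ≤ c) (hfix : IsFixedPt (jumpSystem c d) y) :
    d ≤ y := by
  classical
  simp only [IsFixedPt, jumpSystem, if_neg hy, sup_eq_left] at hfix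
  exact hfix

lemma eq_or_eq_of_inf_eq {a b c : P} (htot : a ≤ b ∨ b ≤ a) (h : a ⊓ b = c) : a = c ∨ b = c :=
  htot.imp (fun hab => (inf_eq_left.2 hab).symm.trans h)
    (fun hba => (inf_eq_right.2 hba).symm.trans h)

variable [Fintype P] {f g h : P → P}

lemma sysJoin_le_of_isFixedPt (hf : Monotone f) (hg : Monotone g) {x y : P} (hxy : x ≤ y)
    (hfy : IsFixedPt f y) (hgy : IsFixedPt g y) : sysJoin f g x ≤ y := by
  have hy : IsFixedPt (f ∘ g) y := by simp only [IsFixedPt, comp_apply, hgy.eq, hfy.eq]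
  calc sysJoin f g x ≤ sysJoin f g y := (hf.comp hg).iterate _ hxy
    _ = y := (hy.iterate _).eq

lemma le_sysJoin (hf : ∀ z, z ≤ f z) (hg : ∀ z, z ≤ g z) (x : P) : x ≤ sysJoin f g x :=
  id_le_iterate_of_id_le (f := f ∘ g) (fun z => (hg z).trans (hf (g z))) _ x

lemma isFixedPt_sysJoin (hf : ∀ z, z ≤ f z) (hg : ∀ z, z ≤ g z) (x : P) :
    IsFixedPt f (sysJoin f g x) ∧ IsFixedPt g (sysJoin f g x) := by
  have hfg : f (g (sysJoin f g x)) = sysJoin f g x :=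
    isFixedPt_iterate_card (fun z => (hg z).trans (hf (g z))) x
  have hgJ : g (sysJoin f g x) = sysJoin f g x :=
    le_antisymm ((hf _).trans_eq hfg) (hg _)
  exact ⟨by rwa [hgJ] at hfg, hgJ⟩

lemma sysJoin_sysMeet_le_sysMeet_sysJoin (hf : IsSystem f) (hg : IsSystem g) (hh : IsSystem h)
    (x : P) : sysJoin (sysMeet f h) (sysMeet g h) x ≤ sysMeet (sysJoin f g) h x := by
  have hfh := (isSystem_sysMeet hf hh).2.1
  have hgh := (isSystem_sysMeet hg hh).2.1
  obtain ⟨hfJ, hgJ⟩ := isFixedPt_sysJoin hf.1 hg.1 x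
  refine le_inf (sysJoin_le_of_isFixedPt hfh hgh (le_sysJoin hf.1 hg.1 x) ?_ ?_)
    (sysJoin_le_of_isFixedPt hfh hgh (hh.1 x) ?_ ?_)
  · simp only [IsFixedPt, sysMeet, hfJ.eq, inf_eq_left.2 (hh.1 _)]
  · simp only [IsFixedPt, sysMeet, hgJ.eq, inf_eq_left.2 (hh.1 _)]
  · simp only [IsFixedPt, sysMeet, hh.2.2, inf_eq_right.2 (hf.1 _)]
  · simp only [IsFixedPt, sysMeet, hh.2.2, inf_eq_right.2 (hg.1 _)]

lemma sysMeet_sysJoin_le_of_total (htot : ∀ a b : P, a ≤ b ∨ b ≤ a) (hf : IsSystem f)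
    (hg : IsSystem g) (hh : IsSystem h) (x : P) :
    sysMeet (sysJoin f g) h x ≤ sysJoin (sysMeet f h) (sysMeet g h) x := by
  have hfh := isSystem_sysMeet hf hh
  have hgh := isSystem_sysMeet hg hh
  set r := sysJoin (sysMeet f h) (sysMeet g h) x
  have hxr : x ≤ r := le_sysJoin hfh.1 hgh.1 x
  obtain ⟨hfhr, hghr⟩ := isFixedPt_sysJoin hfh.1 hgh.1 x
  have below_h : h r = r → sysMeet (sysJoin f g) h x ≤ r := fun hhr =>
    inf_le_right.trans ((hh.2.1 hxr).trans_eq hhr)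
  rcases eq_or_eq_of_inf_eq (htot _ _) hfhr.eq with hfr | hhr
  · rcases eq_or_eq_of_inf_eq (htot _ _) hghr.eq with hgr | hhr
    · exact inf_le_left.trans (sysJoin_le_of_isFixedPt hf.2.1 hg.2.1 hxr hfr hgr)
    · exact below_h hhr
  · exact below_h hhr

lemma exists_sysMeet_sysJoin_ne {a b : P} (hab : ¬ a ≤ b) (hba : ¬ b ≤ a) :
    ∃ f g h : P → P, IsSystem f ∧ IsSystem g ∧ IsSystem h ∧
      sysMeet (sysJoin f g) h (a ⊓ b) ≠ sysJoin (sysMeet f h) (sysMeet g h) (a ⊓ b) := by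
  set f : P → P := (· ⊔ b)
  set g := jumpSystem (a ⊓ b) a
  set h : P → P := (· ⊔ a)
  have hf : IsSystem f := isSystem_sup_const b
  have hg : IsSystem g := isSystem_jumpSystem inf_le_left
  have hh : IsSystem h := isSystem_sup_const a
  refine ⟨f, g, h, hf, hg, hh, fun heq => hab ?_⟩
  obtain ⟨hfJ, hgJ⟩ := isFixedPt_sysJoin hf.1 hg.1 (a ⊓ b)
  have hbJ : b ≤ sysJoin f g (a ⊓ b) := sup_eq_left.1 hfJ
  have haJ : a ≤ sysJoin f g (a ⊓ b) :=
    le_of_isFixedPt_jumpSystem (fun hle => hba ((hbJ.trans hle).trans inf_le_left)) hgJ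
  have hinf_a : a ⊓ b ⊔ a = a := sup_of_le_right inf_le_left
  have hinf_b : a ⊓ b ⊔ b = b := sup_of_le_right inf_le_right
  have hlhs : sysMeet (sysJoin f g) h (a ⊓ b) = a := by
    simp only [sysMeet, h, hinf_a, inf_eq_right.2 haJ]
  have hrhs : sysJoin (sysMeet f h) (sysMeet g h) (a ⊓ b) ≤ a ⊓ b := by
    refine sysJoin_le_of_isFixedPt (isSystem_sysMeet hf hh).2.1 (isSystem_sysMeet hg hh).2.1
      le_rfl ?_ ?_
    · simp only [IsFixedPt, sysMeet, f, h, hinf_a, hinf_b, inf_comm]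
    · simp only [IsFixedPt, sysMeet, g, h, jumpSystem_self, hinf_a, inf_eq_left.2 inf_le_left]
  exact ((hlhs.symm.trans heq).trans_le hrhs).trans inf_le_right

end Lattice

theorem stmt10 {P : Type*} [Lattice P] [Fintype P] :
    (∀ f g h : P → P, IsSystem f → IsSystem g → IsSystem h →
      sysMeet (sysJoin f g) h = sysJoin (sysMeet f h) (sysMeet g h)) ↔
    ∀ a b : P, a ≤ b ∨ b ≤ a := by
  constructor
  · intro hdistrib a b
    by_contra! hinc
    obtain ⟨f, g, h, hf, hg, hh, hne⟩ := exists_sysMeet_sysJoin_ne hinc.1 hinc.2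
    exact hne (congrFun (hdistrib f g h hf hg hh) (a ⊓ b))
  · intro htot f g h hf hg hh
    funext x
    exact le_antisymm (sysMeet_sysJoin_le_of_total htot hf hg hh x)
      (sysJoin_sysMeet_le_sysMeet_sysJoin hf hg hh x)
end

section
/- A pair of systems (f, g) on a finite lattice P is a modular pair in the lattice of systems if and only if the union Φf ∪ Φg of their fixed point sets is closed under binary meet. -/
/-!
A system `h ≤ g` may be chosen with fixed points `Φg ∪ Iic c`. Taking `c = x ⊓ y` with `x ∈ Φf`,
`y ∈ Φg`, the modular law at `c` reads `c = j ⊓ g c`, where `j = (h + f) c` is fixed by `f` and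
by `h`: either `j = c`, so `c ∈ Φf`, or `j ∈ Φg`, so `g c ≤ j` and `c ∈ Φg`.

Conversely, `(h + f) a ⊓ g a` is a common fixed point of `h`, `f` and `g` above `a`, giving
`h + (f · g) ≤ (h + f) · g`. For the other inequality, `c = (h + (f · g)) a` satisfies
`c = f c ⊓ g c`, so meet-closure puts `c` in `Φf`, whence `(h + f) a ≤ c`, or in `Φg`, whence
`g a ≤ c`.
-/

section Iterate

variable {P : Type*} [PartialOrder P] [Fintype P] {F : P → P}

theorem iterate_card_apply_eq_self (hF : ∀ x, x ≤ F x) (a : P) :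
    F (F^[Fintype.card P] a) = F^[Fintype.card P] a := by
  set N := Fintype.card P
  by_contra hN
  have hstep : ∀ k ≤ N, F^[k] a < F^[k + 1] a := fun k hk => by
    rw [Function.iterate_succ_apply']
    refine (hF _).lt_of_ne fun hfix => hN ?_
    rw [← Nat.sub_add_cancel hk, Function.iterate_add_apply, Function.iterate_fixed hfix.symm]
    exact hfix.symm
  have hmono : StrictMono fun i : Fin (N + 1) => F^[i] a :=
    Fin.strictMono_iff_lt_succ.2 fun i => hstep i (Nat.lt_succ_iff.1 i.castSucc.2)
  exact (Fintype.card_le_of_injective _ hmono.injective).not_gt (by simp [N])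

theorem isLeast_iterate_card (hF : ∀ x, x ≤ F x) (hFm : Monotone F) (a : P) :
    IsLeast {y | a ≤ y ∧ F y = y} (F^[Fintype.card P] a) :=
  ⟨⟨Function.id_le_iterate_of_id_le hF _ a, iterate_card_apply_eq_self hF a⟩,
    fun _ ⟨hay, hy⟩ => (hFm.iterate _ hay).trans_eq (Function.iterate_fixed hy _)⟩

end Iterate

section Systems

variable {P : Type*} [Lattice P] {f g h : P → P} {x y : P}

namespace IsSystem

theorem le_apply (hf : IsSystem f) (x : P) : x ≤ f x := hf.1 x

theorem monotone (hf : IsSystem f) : Monotone f := hf.2.1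

theorem apply_apply (hf : IsSystem f) (x : P) : f (f x) = f x := hf.2.2 x

end IsSystem

theorem apply_inf_eq_self (hf : ∀ x, x ≤ f x) (hfm : Monotone f) (hx : f x = x) (hy : f y = y) :
    f (x ⊓ y) = x ⊓ y :=
  le_antisymm (le_inf ((hfm inf_le_left).trans_eq hx) ((hfm inf_le_right).trans_eq hy)) (hf _)

theorem le_sysMeet_apply (hf : ∀ x, x ≤ f x) (hg : ∀ x, x ≤ g x) (x : P) : x ≤ sysMeet f g x :=
  le_inf (hf x) (hg x)

theorem Monotone.sysMeet (hf : Monotone f) (hg : Monotone g) : Monotone (sysMeet f g) :=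
  fun _ _ hxy => inf_le_inf (hf hxy) (hg hxy)

theorem sysMeet_apply_eq_self_iff (hf : ∀ x, x ≤ f x) (hg : ∀ x, x ≤ g x) :
    sysMeet f g y = y ↔ f y ⊓ g y ≤ y :=
  ⟨le_of_eq, fun hy => le_antisymm hy (le_sysMeet_apply hf hg y)⟩

theorem comp_apply_eq_self_iff (hh : ∀ x, x ≤ h x) (hg : ∀ x, x ≤ g x) :
    h (g y) = y ↔ h y = y ∧ g y = y := by
  refine ⟨fun hy => ?_, fun ⟨hhy, hgy⟩ => by rw [hgy, hhy]⟩
  have hgy : g y = y := le_antisymm ((hh _).trans_eq hy) (hg y)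
  exact ⟨by rwa [hgy] at hy, hgy⟩

theorem isLeast_sysJoin [Fintype P] (hh : ∀ x, x ≤ h x) (hhm : Monotone h)
    (hg : ∀ x, x ≤ g x) (hgm : Monotone g) (a : P) :
    IsLeast {y | a ≤ y ∧ h y = y ∧ g y = y} (sysJoin h g a) := by
  have hfixed : {y | a ≤ y ∧ h y = y ∧ g y = y} = {y | a ≤ y ∧ (h ∘ g) y = y} := by
    ext y
    simp only [Set.mem_ofPred_eq, Function.comp_apply, comp_apply_eq_self_iff hh hg]
  rw [hfixed]
  exact isLeast_iterate_card (fun x => (hg x).trans (hh (g x))) (hhm.comp hgm) a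

end Systems

section AdjoinIic

variable {P : Type*} [Lattice P] [DecidableLE P] {g : P → P} {c x : P}

def adjoinIic (g : P → P) (c : P) : P → P := fun x => if x ≤ c then x else g x

theorem adjoinIic_apply_eq_self_iff : adjoinIic g c x = x ↔ x ≤ c ∨ g x = x := by
  unfold adjoinIic
  split_ifs with hx <;> simp [hx]

theorem adjoinIic_le (hg : ∀ x, x ≤ g x) (x : P) : adjoinIic g c x ≤ g x := by
  unfold adjoinIic
  split_ifs
  exacts [hg x, le_rfl]

theorem IsSystem.adjoinIic (hg : IsSystem g) (c : P) : IsSystem (adjoinIic g c) := by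
  refine ⟨fun x => ?_, fun x y hxy => ?_, fun x => ?_⟩ <;> unfold _root_.adjoinIic
  · split_ifs
    exacts [le_rfl, hg.le_apply x]
  · split_ifs with hx hy hy
    exacts [hxy, hxy.trans (hg.le_apply y), absurd (hxy.trans hy) hx, hg.monotone hxy]
  · split_ifs with hx hgx
    exacts [rfl, absurd ((hg.le_apply x).trans hgx) hx, hg.apply_apply x]

end AdjoinIic

section ModularPair

variable {P : Type*} [Lattice P] [Fintype P] {f g : P → P}

theorem apply_inf_eq_self_or_of_modular (hf : IsSystem f) (hg : IsSystem g)
    (hmod : ∀ h : P → P, IsSystem h → (∀ a, h a ≤ g a) →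
      sysJoin h (sysMeet f g) = sysMeet (sysJoin h f) g)
    {x y : P} (hx : f x = x) (hy : g y = y) :
    f (x ⊓ y) = x ⊓ y ∨ g (x ⊓ y) = x ⊓ y := by
  classical
  set c := x ⊓ y
  set h := adjoinIic g c
  have hh : IsSystem h := hg.adjoinIic c
  have hmeet : sysMeet f g c = c := (sysMeet_apply_eq_self_iff hf.le_apply hg.le_apply).2 <|
    inf_le_inf ((hf.monotone inf_le_left).trans_eq hx) ((hg.monotone inf_le_right).trans_eq hy)
  have hjoin : sysJoin h (sysMeet f g) c = c := Function.iterate_fixed (by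
    change h (sysMeet f g c) = c
    rw [hmeet]
    exact adjoinIic_apply_eq_self_iff.2 (Or.inl le_rfl)) _
  set j := sysJoin h f c
  have hc : c = j ⊓ g c := hjoin.symm.trans (congrFun (hmod h hh (adjoinIic_le hg.le_apply)) c)
  obtain ⟨⟨hcj, hhj, hfj⟩, -⟩ := isLeast_sysJoin hh.le_apply hh.monotone hf.le_apply hf.monotone c
  rcases adjoinIic_apply_eq_self_iff.1 hhj with hjc | hgj
  · left
    rwa [← le_antisymm hjc hcj]
  · right
    calc g c = j ⊓ g c := (inf_eq_right.2 ((hg.monotone hcj).trans_eq hgj)).symm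
      _ = c := hc.symm

theorem sysJoin_sysMeet_eq_sysMeet_sysJoin (hf : IsSystem f) (hg : IsSystem g)
    (hinf : ∀ x, f x ⊓ g x = x → f x = x ∨ g x = x)
    {h : P → P} (hh : IsSystem h) (hhg : ∀ a, h a ≤ g a) :
    sysJoin h (sysMeet f g) = sysMeet (sysJoin h f) g := by
  funext a
  obtain ⟨⟨hac, hhc, hmc⟩, hcmin⟩ := isLeast_sysJoin hh.le_apply hh.monotone
    (le_sysMeet_apply hf.le_apply hg.le_apply) (hf.monotone.sysMeet hg.monotone) a
  obtain ⟨⟨haj, hhj, hfj⟩, hjmin⟩ := isLeast_sysJoin hh.le_apply hh.monotone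
    hf.le_apply hf.monotone a
  set c := sysJoin h (sysMeet f g) a
  set j := sysJoin h f a
  change c = j ⊓ g a
  apply le_antisymm
  · have hhga : h (g a) = g a := le_antisymm ((hhg _).trans_eq (hg.apply_apply a)) (hh.le_apply _)
    refine hcmin ⟨le_inf haj (hg.le_apply a), apply_inf_eq_self hh.le_apply hh.monotone hhj hhga,
      (sysMeet_apply_eq_self_iff hf.le_apply hg.le_apply).2 (inf_le_inf ?_ ?_)⟩
    exacts [(hf.monotone inf_le_left).trans_eq hfj,
      (hg.monotone inf_le_right).trans_eq (hg.apply_apply a)]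
  · rcases hinf c hmc with hfc | hgc
    · exact inf_le_left.trans (hjmin ⟨hac, hhc, hfc⟩)
    · exact inf_le_right.trans ((hg.monotone hac).trans_eq hgc)

end ModularPair

theorem stmt13 {P : Type*} [Lattice P] [Fintype P] {f g : P → P}
    (hf : IsSystem f) (hg : IsSystem g) :
    (∀ h : P → P, IsSystem h → (∀ a, h a ≤ g a) →
      sysJoin h (sysMeet f g) = sysMeet (sysJoin h f) g) ↔
    (∀ a b : P, a ∈ {x | f x = x} ∪ {x | g x = x} →
      b ∈ {x | f x = x} ∪ {x | g x = x} →
      a ⊓ b ∈ {x | f x = x} ∪ {x | g x = x}) := by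
  refine ⟨fun hmod a b ha hb => ?_, fun hcl h hh hhg => ?_⟩
  · rcases ha with ha | ha <;> rcases hb with hb | hb
    · exact Or.inl (apply_inf_eq_self hf.le_apply hf.monotone ha hb)
    · exact apply_inf_eq_self_or_of_modular hf hg hmod ha hb
    · exact inf_comm b a ▸ apply_inf_eq_self_or_of_modular hf hg hmod hb ha
    · exact Or.inr (apply_inf_eq_self hg.le_apply hg.monotone ha hb)
  · refine sysJoin_sysMeet_eq_sysMeet_sysJoin hf hg (fun x hx => ?_) hh hhg
    exact hx ▸ hcl _ _ (Or.inl (hf.apply_apply x)) (Or.inr (hg.apply_apply x))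
end

section
/- For a covering pair s ≺ t in a finite lattice P, the least system f_{st} mapping s to t is prime, i.e., its set of non-fixed points is closed under binary meet. -/
/-!
The system `x ↦ if s ≤ x then x ⊔ t else x` sends `s` to `t` whenever `s ≤ t`, so it dominates the
least such system `f`; hence every point above `t` (or not above `s`) is fixed by `f`. Conversely a
point `a ≥ s` fixed by `f` satisfies `t = f s ≤ f a = a`. So the non-fixed points of `f` are exactly
the `a` with `s ≤ a` and `¬ t ≤ a`, a set that is visibly closed under `⊓`.
-/

section

variable {P : Type*} [Lattice P]

open Classical in
noncomputable def joinAbove (s t x : P) : P :=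
  if s ≤ x then x ⊔ t else x

section joinAbove

variable {s t x : P}

theorem joinAbove_of_le (h : s ≤ x) : joinAbove s t x = x ⊔ t := if_pos h

theorem joinAbove_of_not_le (h : ¬ s ≤ x) : joinAbove s t x = x := if_neg h

theorem le_joinAbove (s t x : P) : x ≤ joinAbove s t x := by
  by_cases h : s ≤ x
  · exact (joinAbove_of_le h).symm ▸ le_sup_left
  · exact (joinAbove_of_not_le h).ge

theorem joinAbove_self (h : s ≤ t) : joinAbove s t s = t := by
  rw [joinAbove_of_le le_rfl, sup_eq_right.mpr h]

theorem isSystem_joinAbove (s t : P) : IsSystem (joinAbove s t) := by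
  refine ⟨le_joinAbove s t, fun a b hab => ?_, fun a => ?_⟩
  · by_cases ha : s ≤ a
    · rw [joinAbove_of_le ha, joinAbove_of_le (ha.trans hab)]
      exact sup_le_sup_right hab t
    · exact (joinAbove_of_not_le ha).symm ▸ hab.trans (le_joinAbove s t b)
  · by_cases ha : s ≤ a
    · rw [joinAbove_of_le ha, joinAbove_of_le (ha.trans le_sup_left), sup_assoc, sup_idem]
    · rw [joinAbove_of_not_le ha, joinAbove_of_not_le ha]

end joinAbove

theorem IsSystem.apply_ne_self_iff_of_least {s t : P} {f : P → P} (hf : IsSystem f)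
    (hfs : f s = t) (hleast : ∀ g : P → P, IsSystem g → g s = t → ∀ a, f a ≤ g a) (a : P) :
    f a ≠ a ↔ s ≤ a ∧ ¬ t ≤ a := by
  have hst : s ≤ t := hfs ▸ hf.1 s
  have hf_le : ∀ x, f x ≤ joinAbove s t x :=
    hleast _ (isSystem_joinAbove s t) (joinAbove_self hst)
  constructor
  · intro hfa
    have hsa : s ≤ a := by
      by_contra hsa
      exact hfa ((hf_le a).trans (joinAbove_of_not_le hsa).le |>.antisymm (hf.1 a))
    refine ⟨hsa, fun hta => hfa ?_⟩
    have : f a ≤ a := by simpa [joinAbove_of_le hsa, sup_eq_left.mpr hta] using hf_le a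
    exact this.antisymm (hf.1 a)
  · rintro ⟨hsa, hta⟩ hfa
    exact hta (hfs ▸ hfa ▸ hf.2.1 hsa)

end

theorem stmt15_general {P : Type*} [Lattice P] {s t : P}
    {f : P → P} (hf : IsSystem f) (hfs : f s = t)
    (hleast : ∀ g : P → P, IsSystem g → g s = t → ∀ a, f a ≤ g a) :
    ∀ a b : P, f a ≠ a → f b ≠ b → f (a ⊓ b) ≠ a ⊓ b := by
  simp only [hf.apply_ne_self_iff_of_least hfs hleast]
  rintro a b ⟨hsa, hta⟩ ⟨hsb, -⟩
  exact ⟨le_inf hsa hsb, fun h => hta (h.trans inf_le_left)⟩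

theorem stmt15 {P : Type*} [Lattice P] [Fintype P] {s t : P} (hst : s ⋖ t)
    {f : P → P} (hf : IsSystem f) (hfs : f s = t)
    (hleast : ∀ g : P → P, IsSystem g → g s = t → ∀ a, f a ≤ g a) :
    ∀ a b : P, f a ≠ a → f b ≠ b → f (a ⊓ b) ≠ a ⊓ b :=
  stmt15_general hf hfs hleast
end

section
/- The maps free : P → L_P (a ↦ (x ↦ x ∨ a)) and eval : L_P → P (sending a system to its least fixed point) form a Galois connection: free(a) ≤ f if and only if a ≤ eval(f). -/
theorem stmt17_general {P : Type*} [Lattice P] {f : P → P}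
    (hf : IsSystem f) {l : P} (hl : IsLeast {p | f p = p} l) (a : P) :
    (∀ x, x ⊔ a ≤ f x) ↔ a ≤ l := by
  obtain ⟨hle, -, hidem⟩ := hf
  have hl_le : ∀ x, l ≤ f x := fun x => hl.2 (hidem x)
  constructor
  · intro h
    calc a ≤ l ⊔ a := le_sup_right
      _ ≤ f l := h l
      _ = l := hl.1
  · exact fun h x => sup_le (hle x) (h.trans (hl_le x))

theorem stmt17 {P : Type*} [Lattice P] [Fintype P] {f : P → P}
    (hf : IsSystem f) {l : P} (hl : IsLeast {p | f p = p} l) (a : P) :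
    (∀ x, x ⊔ a ≤ f x) ↔ a ≤ l :=
  stmt17_general hf hl a
end

section
/- A system f on a finite lattice P admits a unique minimal shock failing it if and only if f is prime; in that case the unique minimal shock is ¬f, the system whose fixed point set is (P \ Φf) ∪ {p̂}. -/
/-- Shock `s` fails system `f`: equivalently `s + f = 1`. -/
def Fails {P : Type*} [Lattice P] [OrderTop P] (s f : P → P) : Prop :=
  {a | s a = a} ∩ {a | f a = a} = {⊤}

/-- `s` is a minimal shock failing `f`. -/
def MinShock {P : Type*} [Lattice P] [OrderTop P] (f s : P → P) : Prop :=
  IsSystem s ∧ Fails s f ∧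
    ∀ t : P → P, IsSystem t → Fails t f → (∀ x, t x ≤ s x) → t = s

section Systems

variable {P : Type*} [Lattice P]

namespace IsSystem

variable {s t : P → P}

lemma map_top [OrderTop P] (hs : IsSystem s) : s ⊤ = ⊤ :=
  le_antisymm le_top (hs.1 ⊤)

lemma map_le_of_le_fixed (hs : IsSystem s) {a c : P} (hc : s c = c) (h : a ≤ c) : s a ≤ c :=
  hc ▸ hs.2.1 h

lemma apply_le_of_fixedSet_subset (hs : IsSystem s) (ht : IsSystem t)
    (h : {a | s a = a} ⊆ {a | t a = a}) (a : P) : t a ≤ s a :=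
  ht.map_le_of_le_fixed (h (hs.2.2 a)) (hs.1 a)

lemma eq_of_fixedSet_eq (hs : IsSystem s) (ht : IsSystem t)
    (h : {a | s a = a} = {a | t a = a}) : s = t :=
  funext fun a =>
    le_antisymm (ht.apply_le_of_fixedSet_subset hs h.ge a)
      (hs.apply_le_of_fixedSet_subset ht h.le a)

lemma fixedSet_subset_of_le (hs : IsSystem s) (h : ∀ x, s x ≤ t x) :
    {a | t a = a} ⊆ {a | s a = a} :=
  fun a ha => le_antisymm ((h a).trans_eq ha) (hs.1 a)

lemma map_inf_of_fixed (hs : IsSystem s) {a b : P} (ha : s a = a) (hb : s b = b) :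
    s (a ⊓ b) = a ⊓ b :=
  le_antisymm
    (le_inf (hs.map_le_of_le_fixed ha inf_le_left) (hs.map_le_of_le_fixed hb inf_le_right))
    (hs.1 _)

end IsSystem

section Closure

variable [Fintype P] [OrderTop P] {F : Set P}

open Classical in
noncomputable def closureOf (F : Set P) (a : P) : P :=
  (Finset.univ.filter fun b => b ∈ F ∧ a ≤ b).inf id

lemma le_closureOf (a : P) : a ≤ closureOf F a := by
  classical
  exact Finset.le_inf fun _ hb => (Finset.mem_filter.mp hb).2.2

lemma closureOf_le {a c : P} (hc : c ∈ F) (h : a ≤ c) : closureOf F a ≤ c :=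
  Finset.inf_le (f := id) (by simp [hc, h])

lemma closureOf_mem (hF : InfClosed F) (htop : ⊤ ∈ F) (a : P) : closureOf F a ∈ F := by
  classical
  exact hF.finsetInf_mem ⟨⊤, by simp [htop]⟩ fun _ hb => (Finset.mem_filter.mp hb).2.1

lemma closureOf_eq_self {a : P} (ha : a ∈ F) : closureOf F a = a :=
  le_antisymm (closureOf_le ha le_rfl) (le_closureOf a)

lemma exists_isSystem_fixedSet_eq (hF : InfClosed F) (htop : ⊤ ∈ F) :
    ∃ s : P → P, IsSystem s ∧ {a | s a = a} = F := by
  refine ⟨closureOf F, ⟨le_closureOf, ?_, ?_⟩, ?_⟩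
  · exact fun a b hab =>
      closureOf_le (closureOf_mem hF htop b) (hab.trans (le_closureOf b))
  · exact fun a => closureOf_eq_self (closureOf_mem hF htop a)
  · ext a
    exact ⟨fun h => h ▸ closureOf_mem hF htop a, closureOf_eq_self⟩

end Closure

section Shocks

variable [OrderTop P] {f s : P → P}

lemma fails_iff_fixedSet_subset (hs : s ⊤ = ⊤) (hf : f ⊤ = ⊤) :
    Fails s f ↔ {a | s a = a} ⊆ {a | f a ≠ a} ∪ {⊤} := by
  constructor
  · intro hfail a ha
    by_cases hfa : f a = a
    · exact Or.inr (hfail ▸ ⟨ha, hfa⟩ : a ∈ ({⊤} : Set P))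
    · exact Or.inl hfa
  · intro hsub
    ext a
    constructor
    · rintro ⟨hsa, hfa⟩
      exact (hsub hsa).resolve_left (not_not_intro hfa)
    · rintro rfl
      exact ⟨hs, hf⟩

lemma exists_minShock_le [Fintype P] (hs : IsSystem s) (hfail : Fails s f) :
    ∃ t, MinShock f t ∧ ∀ x, t x ≤ s x := by
  let S : Set (P → P) := {t | IsSystem t ∧ Fails t f ∧ ∀ x, t x ≤ s x}
  obtain ⟨t, ⟨ht, htf, hts⟩, hmin⟩ :=
    S.toFinite.exists_minimalFor id S ⟨s, hs, hfail, fun _ => le_rfl⟩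
  refine ⟨t, ⟨ht, htf, fun u hu huf hut => ?_⟩, hts⟩
  exact le_antisymm hut (hmin ⟨hu, huf, fun x => (hut x).trans (hts x)⟩ hut)

lemma exists_minShock_fixing [Fintype P] (hf : IsSystem f) {c : P} (hc : f c ≠ c) :
    ∃ t, MinShock f t ∧ t c = c := by
  have hF : InfClosed ({c, ⊤} : Set P) :=
    infClosed_singleton.insert_lowerBounds fun _ h => h ▸ le_top
  obtain ⟨s, hs, hΦs⟩ := exists_isSystem_fixedSet_eq hF (Set.mem_insert_of_mem c rfl)
  have hfail : Fails s f := by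
    rw [fails_iff_fixedSet_subset hs.map_top hf.map_top, hΦs]
    rintro a (rfl | rfl)
    exacts [Or.inl hc, Or.inr rfl]
  obtain ⟨t, ht, hts⟩ := exists_minShock_le hs hfail
  have hsc : s c = c := hΦs.ge (Set.mem_insert c _)
  exact ⟨t, ht, le_antisymm ((hts c).trans_eq hsc) (ht.1.1 c)⟩

lemma minShock_iff_fixedSet_eq [Fintype P] (hf : IsSystem f)
    (hF : InfClosed ({a | f a ≠ a} ∪ {⊤})) {t : P → P} :
    MinShock f t ↔ IsSystem t ∧ {a | t a = a} = {a | f a ≠ a} ∪ {⊤} := by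
  have fails_iff {u : P → P} (hu : IsSystem u) :=
    fails_iff_fixedSet_subset hu.map_top hf.map_top
  constructor
  · rintro ⟨ht, htf, hmin⟩
    obtain ⟨s, hs, hΦs⟩ := exists_isSystem_fixedSet_eq hF (Or.inr rfl)
    have hst : ∀ x, s x ≤ t x :=
      ht.apply_le_of_fixedSet_subset hs (hΦs ▸ (fails_iff ht).mp htf)
    have hfail : Fails s f := (fails_iff hs).mpr hΦs.le
    exact ⟨ht, hmin s hs hfail hst ▸ hΦs⟩
  · rintro ⟨ht, hΦt⟩
    refine ⟨ht, (fails_iff ht).mpr hΦt.le, fun u hu huf hut => ?_⟩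
    refine hu.eq_of_fixedSet_eq ht (subset_antisymm ?_ (hu.fixedSet_subset_of_le hut))
    exact hΦt ▸ (fails_iff hu).mp huf

lemma inf_not_fixed_of_existsUnique_minShock [Fintype P] (hf : IsSystem f)
    (huniq : ∃! s, MinShock f s) {a b : P} (ha : f a ≠ a) (hb : f b ≠ b) :
    f (a ⊓ b) ≠ a ⊓ b := by
  intro hab
  obtain ⟨s, hs, hs_unique⟩ := huniq
  have fixes {c : P} (hc : f c ≠ c) : s c = c := by
    obtain ⟨t, ht, htc⟩ := exists_minShock_fixing hf hc
    exact hs_unique t ht ▸ htc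
  have hmem : a ⊓ b ∈ {a | s a = a} ∩ {a | f a = a} :=
    ⟨hs.1.map_inf_of_fixed (fixes ha) (fixes hb), hab⟩
  rw [hs.2.1, Set.mem_singleton_iff, inf_eq_top_iff] at hmem
  exact ha (hmem.1 ▸ hf.map_top)

lemma existsUnique_minShock [Fintype P] (hf : IsSystem f)
    (hF : InfClosed ({a | f a ≠ a} ∪ {⊤})) : ∃! s, MinShock f s := by
  obtain ⟨s, hs, hΦs⟩ := exists_isSystem_fixedSet_eq hF (Or.inr rfl)
  refine ⟨s, (minShock_iff_fixedSet_eq hf hF).mpr ⟨hs, hΦs⟩, fun t ht => ?_⟩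
  obtain ⟨ht, hΦt⟩ := (minShock_iff_fixedSet_eq hf hF).mp ht
  exact ht.eq_of_fixedSet_eq hs (hΦt.trans hΦs.symm)

end Shocks

end Systems

theorem stmt18 {P : Type*} [Lattice P] [Fintype P] [OrderTop P] {f : P → P}
    (hf : IsSystem f) :
    ((∃! s : P → P, MinShock f s) ↔
      ∀ a b : P, f a ≠ a → f b ≠ b → f (a ⊓ b) ≠ a ⊓ b) ∧
    ((∀ a b : P, f a ≠ a → f b ≠ b → f (a ⊓ b) ≠ a ⊓ b) →
      ∀ s : P → P, MinShock f s ↔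
        (IsSystem s ∧ {a | s a = a} = {a | f a ≠ a} ∪ {⊤})) := by
  have infClosed_of_prime (hp : ∀ a b : P, f a ≠ a → f b ≠ b → f (a ⊓ b) ≠ a ⊓ b) :
      InfClosed ({a | f a ≠ a} ∪ {⊤}) := by
    rw [Set.union_singleton]
    exact InfClosed.insert_upperBounds (fun a ha b hb => hp a b ha hb) fun _ _ => le_top
  exact ⟨⟨fun huniq a b => inf_not_fixed_of_existsUnique_minShock hf huniq,
      fun hp => existsUnique_minShock hf (infClosed_of_prime hp)⟩,
    fun hp s => minShock_iff_fixedSet_eq hf (infClosed_of_prime hp)⟩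
end
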